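/- Let X be a compact metric space, f : X → X continuous, and suppose the topological entropy of f is positive and the entropy map is upper semi-continuous and affine. Let Φ : X → ℝ^m be continuous with Rot(Φ) having nonempty interior. Then the localized entropy function H : Rot(Φ) → [0,∞), H(w) = sup{h_μ(f) : rv(μ) = w}, is concave, and H(w) > 0 for every w in the interior of Rot(Φ). -/

import Mathlib

open MeasureTheory Topology Set
open scoped NNReal

/-- The set of `f`-invariant Borel probability measures. -/
def invMeasures {X : Type*} [MeasurableSpace X] (f : X → X) :
    Set (ProbabilityMeasure X) :=
  {μ | (μ : Measure X).map f = (μ : Measure X)}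

/-- Rotation vector of a measure with respect to `Φ = (φ₁, …, φ_m)`. -/
noncomputable def rv {X : Type*} [MeasurableSpace X] {m : ℕ}
    (Φ : Fin m → X → ℝ) (μ : ProbabilityMeasure X) : Fin m → ℝ :=
  fun i => ∫ x, Φ i x ∂(μ : Measure X)

/-- The rotation set of `Φ`. -/
noncomputable def rotSet {X : Type*} [MeasurableSpace X] {m : ℕ}
    (f : X → X) (Φ : Fin m → X → ℝ) : Set (Fin m → ℝ) :=
  rv Φ '' invMeasures f

/-- The rotation class of a rotation vector `w`. -/
noncomputable def rotClass {X : Type*} [MeasurableSpace X] {m : ℕ}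
    (f : X → X) (Φ : Fin m → X → ℝ) (w : Fin m → ℝ) : Set (ProbabilityMeasure X) :=
  {μ ∈ invMeasures f | rv Φ μ = w}

/-- The localized entropy function `H(w) = sup {h(μ) : rv(μ) = w}`. -/
noncomputable def locEntropy {X : Type*} [MeasurableSpace X] {m : ℕ}
    (f : X → X) (Φ : Fin m → X → ℝ) (h : ProbabilityMeasure X → ℝ)
    (w : Fin m → ℝ) : ℝ :=
  sSup (h '' rotClass f Φ w)

/-!
Mixing invariant measures `t μ + (1 - t) ν` keeps them invariant and is affine both in the
rotation vector and (by hypothesis) in the entropy, so a mixture of measures from the rotation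
classes of `w₁` and `w₂` lies in the class of `t w₁ + (1 - t) w₂` with entropy
`t h(μ) + (1 - t) h(ν)`; taking suprema gives concavity of `H`. These suprema are finite:
if `h` were unbounded, mixing a proportion `1/(n+1)` of a measure of entropy `≥ n + 1` into a
fixed invariant `μ₀` would converge weakly to `μ₀` while adding entropy at least `1`,
against upper semicontinuity at `μ₀`. Finally, a nonnegative concave function positive at one
point `w₀` of its domain is positive at every interior point `w`, since `w` lies strictly
between `w₀` and another point of the domain.
-/

open Filter

open Pointwise in
lemma Real.smul_sSup_add_smul_sSup_le {S T : Set ℝ} (hS : S.Nonempty) (hS' : BddAbove S)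
    (hT : T.Nonempty) (hT' : BddAbove T) {a b c : ℝ} (ha : 0 ≤ a) (hb : 0 ≤ b)
    (hc : ∀ x ∈ S, ∀ y ∈ T, a * x + b * y ≤ c) : a • sSup S + b • sSup T ≤ c := by
  rw [← Real.sSup_smul_of_nonneg ha, ← Real.sSup_smul_of_nonneg hb,
    ← csSup_add (hS.smul_set) (hS'.smul_of_nonneg ha) (hT.smul_set) (hT'.smul_of_nonneg hb)]
  refine csSup_le (hS.smul_set.add hT.smul_set) ?_
  rintro _ ⟨_, ⟨x, hx, rfl⟩, _, ⟨y, hy, rfl⟩, rfl⟩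
  exact hc x hx y hy

lemma exists_mem_add_smul_sub_of_mem_interior {E : Type*} [AddCommGroup E] [Module ℝ E]
    [TopologicalSpace E] [IsTopologicalAddGroup E] [ContinuousSMul ℝ E] {s : Set E} {x : E}
    (hx : x ∈ interior s) (y : E) : ∃ ε > (0 : ℝ), x + ε • (x - y) ∈ s := by
  have hcont : Continuous fun ε : ℝ => x + ε • (x - y) := by fun_prop
  have hnhds : ∀ᶠ ε in 𝓝 (0 : ℝ), x + ε • (x - y) ∈ s := by
    refine hcont.continuousAt.eventually_mem ?_
    simpa using mem_interior_iff_mem_nhds.1 hx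
  obtain ⟨ε, hε, hεpos⟩ :=
    ((hnhds.filter_mono (nhdsWithin_le_nhds (s := Ioi 0))).and self_mem_nhdsWithin).exists
  exact ⟨ε, hεpos, hε⟩

lemma ConcaveOn.pos_of_mem_interior {E : Type*} [AddCommGroup E] [Module ℝ E]
    [TopologicalSpace E] [IsTopologicalAddGroup E] [ContinuousSMul ℝ E] {s : Set E} {g : E → ℝ}
    (hg : ConcaveOn ℝ s g) (hg₀ : ∀ x ∈ s, 0 ≤ g x) {x₀ : E} (hx₀ : x₀ ∈ s) (hpos : 0 < g x₀)
    {x : E} (hx : x ∈ interior s) : 0 < g x := by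
  obtain ⟨ε, hε, hy⟩ := exists_mem_add_smul_sub_of_mem_interior hx x₀
  set y := x + ε • (x - x₀)
  have hcombo : (ε / (1 + ε)) • x₀ + (1 / (1 + ε)) • y = x := by
    simp only [y]
    match_scalars
    · field_simp
      ring
    · field_simp
  have hweights : ε / (1 + ε) + 1 / (1 + ε) = 1 := by field_simp; ring
  calc 0 < ε / (1 + ε) * g x₀ + 1 / (1 + ε) * g y := by
        have := hg₀ y hy
        positivity
    _ ≤ g x := hcombo ▸ hg.2 hx₀ hy (by positivity) (by positivity) hweights

namespace MeasureTheory.ProbabilityMeasure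

variable {X : Type*} [MeasurableSpace X]

noncomputable def mix (t : ℝ≥0) (ht : t ≤ 1) (μ ν : ProbabilityMeasure X) :
    ProbabilityMeasure X :=
  ⟨t • (μ : Measure X) + (1 - t) • (ν : Measure X),
    ⟨by simp [add_tsub_cancel_of_le (ENNReal.coe_le_one_iff.2 ht)]⟩⟩

variable {t : ℝ≥0} {ht : t ≤ 1} {μ ν : ProbabilityMeasure X}

@[simp]
lemma coe_mix : (mix t ht μ ν : Measure X) = t • (μ : Measure X) + (1 - t) • (ν : Measure X) :=
  rfl

lemma integral_mix {g : X → ℝ} (hμ : Integrable g μ) (hν : Integrable g ν) :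
    ∫ x, g x ∂(mix t ht μ ν : Measure X)
      = t * ∫ x, g x ∂(μ : Measure X) + ((1 : ℝ) - t) * ∫ x, g x ∂(ν : Measure X) := by
  rw [coe_mix, integral_add_measure (hμ.smul_measure_nnreal) (hν.smul_measure_nnreal),
    integral_smul_nnreal_measure, integral_smul_nnreal_measure, NNReal.smul_def,
    NNReal.smul_def, NNReal.coe_sub ht, NNReal.coe_one, smul_eq_mul, smul_eq_mul]

lemma tendsto_mix_of_tendsto_zero [TopologicalSpace X] [OpensMeasurableSpace X]
    {t : ℕ → ℝ≥0} (ht : ∀ n, t n ≤ 1) (ht₀ : Tendsto t atTop (𝓝 0))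
    (μ : ℕ → ProbabilityMeasure X) (ν : ProbabilityMeasure X) :
    Tendsto (fun n => mix (t n) (ht n) (μ n) ν) atTop (𝓝 ν) := by
  rw [tendsto_iff_forall_integral_tendsto]
  intro g
  have hmix : ∀ n, ∫ x, g x ∂(mix (t n) (ht n) (μ n) ν : Measure X)
      = ∫ x, g x ∂(ν : Measure X)
        + t n * (∫ x, g x ∂(μ n : Measure X) - ∫ x, g x ∂(ν : Measure X)) := fun n => by
    rw [integral_mix (g.integrable _) (g.integrable _)]
    ring
  have hbdd : IsBoundedUnder (· ≤ ·) atTop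
      fun n => ‖∫ x, g x ∂(μ n : Measure X) - ∫ x, g x ∂(ν : Measure X)‖ :=
    isBoundedUnder_of ⟨‖g‖ + ‖g‖, fun n =>
      (norm_sub_le _ _).trans (add_le_add (g.norm_integral_le_norm _) (g.norm_integral_le_norm _))⟩
  have hsmall := (NNReal.tendsto_coe.2 ht₀).zero_mul_isBoundedUnder_le hbdd
  simpa only [hmix, NNReal.coe_zero, add_zero] using tendsto_const_nhds.add hsmall

end MeasureTheory.ProbabilityMeasure

open ProbabilityMeasure

def MixAffineOn {X : Type*} [MeasurableSpace X] (h : ProbabilityMeasure X → ℝ)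
    (S : Set (ProbabilityMeasure X)) : Prop :=
  ∀ μ ∈ S, ∀ ν ∈ S, ∀ t : ℝ≥0, t ≤ 1 → ∀ ξ : ProbabilityMeasure X,
    (ξ : Measure X) = t • (μ : Measure X) + (1 - t) • (ν : Measure X) →
    h ξ = (t : ℝ) * h μ + ((1 : ℝ) - (t : ℝ)) * h ν

section Rotation

variable {X : Type*} [MeasurableSpace X] {m : ℕ} {f : X → X} {Φ : Fin m → X → ℝ}
  {h : ProbabilityMeasure X → ℝ} {t : ℝ≥0} {ht : t ≤ 1} {μ ν : ProbabilityMeasure X}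

lemma MixAffineOn.apply_mix {S : Set (ProbabilityMeasure X)} (haff : MixAffineOn h S)
    (hμ : μ ∈ S) (hν : ν ∈ S) :
    h (mix t ht μ ν) = t * h μ + ((1 : ℝ) - t) * h ν :=
  haff μ hμ ν hν t ht _ rfl

lemma mix_mem_invMeasures (hf : Measurable f) (hμ : μ ∈ invMeasures f)
    (hν : ν ∈ invMeasures f) : mix t ht μ ν ∈ invMeasures f := by
  change Measure.map f (t • (μ : Measure X) + (1 - t) • (ν : Measure X)) = _
  rw [Measure.map_add _ _ hf, Measure.map_smul, Measure.map_smul, hμ, hν, coe_mix]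

lemma rv_mix (hμ : ∀ i, Integrable (Φ i) μ) (hν : ∀ i, Integrable (Φ i) ν) :
    rv Φ (mix t ht μ ν) = (t : ℝ) • rv Φ μ + ((1 : ℝ) - t) • rv Φ ν :=
  funext fun i => integral_mix (hμ i) (hν i)

lemma mix_mem_rotClass [TopologicalSpace X] [CompactSpace X] [OpensMeasurableSpace X]
    (hf : Measurable f) (hΦ : ∀ i, Continuous (Φ i)) {w₁ w₂ : Fin m → ℝ}
    (hμ : μ ∈ rotClass f Φ w₁) (hν : ν ∈ rotClass f Φ w₂) :
    mix t ht μ ν ∈ rotClass f Φ ((t : ℝ) • w₁ + ((1 : ℝ) - t) • w₂) := by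
  have hint : ∀ (ρ : ProbabilityMeasure X) i, Integrable (Φ i) ρ := fun ρ i =>
    (hΦ i).integrable_of_hasCompactSupport (HasCompactSupport.of_compactSpace _)
  refine ⟨mix_mem_invMeasures hf hμ.1 hν.1, ?_⟩
  rw [rv_mix (hint μ) (hint ν), hμ.2, hν.2]

lemma convex_rotSet [TopologicalSpace X] [CompactSpace X] [OpensMeasurableSpace X]
    (hf : Measurable f) (hΦ : ∀ i, Continuous (Φ i)) : Convex ℝ (rotSet f Φ) := by
  rintro _ ⟨μ, hμ, rfl⟩ _ ⟨ν, hν, rfl⟩ a b ha hb hab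
  lift a to ℝ≥0 using ha
  obtain rfl : b = 1 - a := eq_sub_of_add_eq' hab
  have ha₁ : a ≤ 1 := by exact_mod_cast sub_nonneg.1 hb
  exact ⟨_, mix_mem_rotClass hf hΦ (ht := ha₁) ⟨hμ, rfl⟩ ⟨hν, rfl⟩⟩

end Rotation

section LocalizedEntropy

variable {X : Type*} [MeasurableSpace X] {m : ℕ} {f : X → X} {Φ : Fin m → X → ℝ}
  {h : ProbabilityMeasure X → ℝ}

lemma mem_rotSet_iff_nonempty_rotClass {w : Fin m → ℝ} :
    w ∈ rotSet f Φ ↔ (rotClass f Φ w).Nonempty :=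
  Iff.rfl

lemma bddAbove_image_invMeasures [TopologicalSpace X] [OpensMeasurableSpace X]
    (hf : Measurable f) (husc : UpperSemicontinuousOn h (invMeasures f))
    (haff : MixAffineOn h (invMeasures f)) : BddAbove (h '' invMeasures f) := by
  rcases (invMeasures f).eq_empty_or_nonempty with hempty | ⟨μ₀, hμ₀⟩
  · simp [hempty]
  by_contra hunbdd
  have hlarge : ∀ n : ℕ, ∃ μ ∈ invMeasures f, (n : ℝ) + 1 ≤ h μ := fun n => by
    obtain ⟨_, ⟨μ, hμ, rfl⟩, hlt⟩ := not_bddAbove_iff.1 hunbdd ((n : ℝ) + 1)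
    exact ⟨μ, hμ, hlt.le⟩
  choose μ hμ hμ_large using hlarge
  set t : ℕ → ℝ≥0 := fun n => ((n : ℝ≥0) + 1)⁻¹
  have ht : ∀ n, t n ≤ 1 := fun n => inv_le_one_of_one_le₀ (le_add_of_nonneg_left n.cast_nonneg)
  have ht₀ : Tendsto t atTop (𝓝 0) := by
    simpa [t] using tendsto_one_div_add_atTop_nhds_zero_nat (𝕜 := ℝ≥0)
  set ξ := fun n => mix (t n) (ht n) (μ n) μ₀
  have hξ : Tendsto ξ atTop (𝓝[invMeasures f] μ₀) :=
    tendsto_nhdsWithin_iff.2 ⟨tendsto_mix_of_tendsto_zero ht ht₀ μ μ₀,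
      Eventually.of_forall fun n => mix_mem_invMeasures hf (hμ n) hμ₀⟩
  have hgain : ∀ n, 1 + h μ₀ - t n * h μ₀ ≤ h (ξ n) := fun n => by
    have : 1 ≤ (t n : ℝ) * h (μ n) := by
      rw [NNReal.coe_inv, le_inv_mul_iff₀ (by positivity)]
      simpa using hμ_large n
    rw [haff.apply_mix (hμ n) hμ₀]
    linarith
  have husc₀ : ∀ᶠ n in atTop, h (ξ n) < h μ₀ + 1 / 2 :=
    hξ.eventually (husc μ₀ hμ₀ _ (by linarith))
  have hsmall : ∀ᶠ n in atTop, (t n : ℝ) * h μ₀ < 1 / 2 := by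
    have := (NNReal.tendsto_coe.2 ht₀).mul_const (h μ₀)
    rw [NNReal.coe_zero, zero_mul] at this
    exact this.eventually_lt_const (by norm_num)
  obtain ⟨n, hn₁, hn₂⟩ := (husc₀.and hsmall).exists
  linarith [hgain n]

lemma bddAbove_image_rotClass (hbdd : BddAbove (h '' invMeasures f)) (w : Fin m → ℝ) :
    BddAbove (h '' rotClass f Φ w) :=
  hbdd.mono (image_mono fun _ hμ => hμ.1)

lemma le_locEntropy (hbdd : BddAbove (h '' invMeasures f)) {w : Fin m → ℝ}
    {μ : ProbabilityMeasure X} (hμ : μ ∈ rotClass f Φ w) : h μ ≤ locEntropy f Φ h w :=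
  le_csSup (bddAbove_image_rotClass hbdd w) (mem_image_of_mem h hμ)

lemma locEntropy_nonneg (h0 : ∀ μ ∈ invMeasures f, 0 ≤ h μ)
    (hbdd : BddAbove (h '' invMeasures f)) {w : Fin m → ℝ} (hw : w ∈ rotSet f Φ) :
    0 ≤ locEntropy f Φ h w := by
  obtain ⟨μ, hμ⟩ := mem_rotSet_iff_nonempty_rotClass.1 hw
  exact (h0 μ hμ.1).trans (le_locEntropy hbdd hμ)

lemma concaveOn_locEntropy [TopologicalSpace X] [CompactSpace X] [OpensMeasurableSpace X]
    (hf : Measurable f) (hΦ : ∀ i, Continuous (Φ i)) (haff : MixAffineOn h (invMeasures f))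
    (hbdd : BddAbove (h '' invMeasures f)) : ConcaveOn ℝ (rotSet f Φ) (locEntropy f Φ h) := by
  refine ⟨convex_rotSet hf hΦ, fun w₁ hw₁ w₂ hw₂ a b ha hb hab => ?_⟩
  lift a to ℝ≥0 using ha
  obtain rfl : b = 1 - a := eq_sub_of_add_eq' hab
  have ha₁ : a ≤ 1 := by exact_mod_cast sub_nonneg.1 hb
  refine Real.smul_sSup_add_smul_sSup_le
    ((mem_rotSet_iff_nonempty_rotClass.1 hw₁).image h) (bddAbove_image_rotClass hbdd w₁)
    ((mem_rotSet_iff_nonempty_rotClass.1 hw₂).image h) (bddAbove_image_rotClass hbdd w₂)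
    a.2 hb ?_
  rintro _ ⟨μ, hμ, rfl⟩ _ ⟨ν, hν, rfl⟩
  rw [← haff.apply_mix (ht := ha₁) hμ.1 hν.1]
  exact le_locEntropy hbdd (mix_mem_rotClass hf hΦ hμ hν)

end LocalizedEntropy

theorem locEntropy_concave_and_pos_on_interior_general
    {X : Type*} [MetricSpace X] [CompactSpace X] [MeasurableSpace X] [BorelSpace X]
    (f : X → X) (hf : Continuous f) {m : ℕ}
    (Φ : Fin m → X → ℝ) (hΦ : ∀ i, Continuous (Φ i))
    (h : ProbabilityMeasure X → ℝ) (h0 : ∀ μ, 0 ≤ h μ)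
    (husc : UpperSemicontinuousOn h (invMeasures f))
    (haff : ∀ μ ∈ invMeasures f, ∀ ν ∈ invMeasures f, ∀ t : ℝ≥0, t ≤ 1 →
      ∀ ξ : ProbabilityMeasure X,
        (ξ : Measure X) = t • (μ : Measure X) + (1 - t) • (ν : Measure X) →
        h ξ = (t : ℝ) * h μ + ((1 : ℝ) - (t : ℝ)) * h ν)
    (hpos : ∃ μ ∈ invMeasures f, 0 < h μ) :
    ConcaveOn ℝ (rotSet f Φ) (locEntropy f Φ h) ∧
      ∀ w ∈ interior (rotSet f Φ), 0 < locEntropy f Φ h w := by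
  obtain ⟨μ₀, hμ₀, hμ₀_pos⟩ := hpos
  have hbdd : BddAbove (h '' invMeasures f) :=
    bddAbove_image_invMeasures hf.measurable husc haff
  have hconc : ConcaveOn ℝ (rotSet f Φ) (locEntropy f Φ h) :=
    concaveOn_locEntropy hf.measurable hΦ haff hbdd
  refine ⟨hconc, fun w hw => hconc.pos_of_mem_interior
    (fun _ => locEntropy_nonneg (fun μ _ => h0 μ) hbdd) ⟨μ₀, hμ₀, rfl⟩ ?_ hw⟩
  exact hμ₀_pos.trans_le (le_locEntropy hbdd ⟨hμ₀, rfl⟩)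

/-- If `f` has positive topological entropy (i.e. some invariant measure has
positive entropy) and the entropy map is affine and upper semi-continuous, then
the localized entropy function is concave on `Rot(Φ)` and strictly positive on
its interior. -/
theorem locEntropy_concave_and_pos_on_interior
    {X : Type*} [MetricSpace X] [CompactSpace X] [MeasurableSpace X] [BorelSpace X]
    (f : X → X) (hf : Continuous f) {m : ℕ}
    (Φ : Fin m → X → ℝ) (hΦ : ∀ i, Continuous (Φ i))
    (h : ProbabilityMeasure X → ℝ) (h0 : ∀ μ, 0 ≤ h μ)
    (husc : UpperSemicontinuousOn h (invMeasures f))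
    (haff : ∀ μ ∈ invMeasures f, ∀ ν ∈ invMeasures f, ∀ t : ℝ≥0, t ≤ 1 →
      ∀ ξ : ProbabilityMeasure X,
        (ξ : Measure X) = t • (μ : Measure X) + (1 - t) • (ν : Measure X) →
        h ξ = (t : ℝ) * h μ + ((1 : ℝ) - (t : ℝ)) * h ν)
    (hpos : ∃ μ ∈ invMeasures f, 0 < h μ)
    (hint : (interior (rotSet f Φ)).Nonempty) :
    ConcaveOn ℝ (rotSet f Φ) (locEntropy f Φ h) ∧
      ∀ w ∈ interior (rotSet f Φ), 0 < locEntropy f Φ h w :=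
  locEntropy_concave_and_pos_on_interior_general f hf Φ hΦ h h0 husc haff hpos
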